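/- arXiv:2311.09572 — 3 statements merged into one kernel-verified Lean document; each statement's English description precedes it below -/
import Mathlib

section
/- Let λ be a probability sequence on ℕ with λ(n) > 0 for all n, and let ℓ ∈ ℕ. Assume the series ∑_{n=ℓ}^∞ λ(n)·(log λ(n) - log λ(n+1)) converges. Then -s_ℓ·log(s_{ℓ+1}/s_ℓ) ≤ ∑_{n=ℓ}^∞ λ(n)·(log λ(n) - log λ(n+1)), where s_ℓ := ∑_{n=ℓ}^∞ λ(n). -/
open Real

/-! The claim is the log-sum inequality for the weights `a k = λ(ℓ+k)` and `b k = λ(ℓ+k+1)`, whose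
totals are `s_ℓ` and `s_{ℓ+1}`. It follows by summing Gibbs' pointwise bound
`a - b' ≤ a (log a - log b')` over `k` for the rescaled weights `b' k = (s_ℓ / s_{ℓ+1}) b k`,
which have the same total mass as `a`. -/

/-- Tail sums `s_ℓ = ∑_{n=ℓ}^∞ λ(n)` of a sequence. -/
noncomputable def tailSum (lam : ℕ → ℝ) (ℓ : ℕ) : ℝ := ∑' n : ℕ, lam (ℓ + n)

theorem sub_le_mul_log_sub_log {a b : ℝ} (ha : 0 ≤ a) (hb : 0 < b) :
    a - b ≤ a * (log a - log b) := by
  rcases ha.eq_or_lt with rfl | ha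
  · simpa using hb.le
  have h := mul_le_mul_of_nonneg_left (self_sub_one_le_mul_log (div_pos ha hb).le) hb.le
  rw [log_div ha.ne' hb.ne'] at h
  field_simp at h
  linarith

theorem mul_log_div_le_tsum_mul_log_sub_log {ι : Type*} {a b : ι → ℝ} {A B : ℝ}
    (ha : ∀ i, 0 ≤ a i) (hb : ∀ i, 0 < b i) (hA : HasSum a A) (hB : HasSum b B) (hA₀ : 0 < A)
    (h : Summable fun i => a i * (log (a i) - log (b i))) :
    A * log (A / B) ≤ ∑' i, a i * (log (a i) - log (b i)) := by
  obtain ⟨i⟩ : Nonempty ι := by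
    by_contra hι
    rw [not_nonempty_iff] at hι
    exact hA₀.ne' (hA.unique hasSum_empty)
  have hB₀ : 0 < B := (hb i).trans_le (le_hasSum hB i fun j _ => (hb j).le)
  set c := A / B
  have hc : 0 < c := div_pos hA₀ hB₀
  have hpt : ∀ i, a i - c * b i + a i * log c ≤ a i * (log (a i) - log (b i)) := fun i => by
    have := sub_le_mul_log_sub_log (ha i) (mul_pos hc (hb i))
    rw [log_mul hc.ne' (hb i).ne'] at this
    linarith
  have hsum := hasSum_le hpt (((hA.sub (hB.mul_left c)).add (hA.mul_right (log c)))) h.hasSum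
  have hcB : c * B = A := div_mul_cancel₀ A hB₀.ne'
  linarith

theorem hasSum_tailSum {lam : ℕ → ℝ} (h : Summable lam) (ℓ : ℕ) :
    HasSum (fun n => lam (ℓ + n)) (tailSum lam ℓ) :=
  (h.comp_injective (add_right_injective ℓ)).hasSum

/-- The `p = 1` limiting case of the Hölder inequality used in the proof of the meta
log-Sobolev inequality: `-s_ℓ·log(s_{ℓ+1}/s_ℓ) ≤ ∑_{n=ℓ}^∞ λ(n)·(log λ(n) - log λ(n+1))`. -/
theorem tailSum_log_ineq (lam : ℕ → ℝ) (hpos : ∀ n, 0 < lam n) (hsum : HasSum lam 1)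
    (ℓ : ℕ)
    (hconv : Summable (fun k : ℕ =>
      lam (ℓ + k) * (Real.log (lam (ℓ + k)) - Real.log (lam (ℓ + k + 1))))) :
    -(tailSum lam ℓ) * Real.log (tailSum lam (ℓ+1) / tailSum lam ℓ)
      ≤ ∑' k : ℕ, lam (ℓ + k) * (Real.log (lam (ℓ + k)) - Real.log (lam (ℓ + k + 1))) := by
  have hA := hasSum_tailSum hsum.summable ℓ
  have hB : HasSum (fun k => lam (ℓ + k + 1)) (tailSum lam (ℓ + 1)) := by
    simpa only [add_right_comm ℓ 1] using hasSum_tailSum hsum.summable (ℓ + 1)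
  have hA₀ : 0 < tailSum lam ℓ := hA.summable.tsum_pos (fun _ => (hpos _).le) 0 (hpos _)
  calc -(tailSum lam ℓ) * log (tailSum lam (ℓ + 1) / tailSum lam ℓ)
      = tailSum lam ℓ * log (tailSum lam ℓ / tailSum lam (ℓ + 1)) := by
        rw [← inv_div, log_inv]; ring
    _ ≤ _ :=
      mul_log_div_le_tsum_mul_log_sub_log (fun _ => (hpos _).le) (fun _ => hpos _) hA hB hA₀ hconv
end

section
/- Let λ be a probability sequence on ℕ with λ(n) > 0 for all n, such that the series ∑ λ(n)·log λ(n) converges and s_k·log s_k → 0 as k → ∞, where s_ℓ := ∑_{n=ℓ}^∞ λ(n). Set x_ℓ := s_{ℓ+1}/s_ℓ (so x_ℓ ∈ (0,1) for every ℓ). Then ∑_{ℓ=0}^∞ s_ℓ·(x_ℓ·log x_ℓ + (1-x_ℓ)·log(1-x_ℓ)) = ∑_{ℓ=0}^∞ λ(ℓ)·log λ(ℓ). -/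
/-!
With `s ℓ = λ ℓ + s (ℓ + 1)`, the `ℓ`-th summand is `-s ℓ · binEntropy (s (ℓ + 1) / s ℓ)`, and the
two-point chain rule `s · binEntropy (b / s) = negMulLog a + negMulLog b - negMulLog s` (for
`s = a + b`) turns it into `λ ℓ log λ ℓ` plus the telescoping difference
`s (ℓ + 1) log s (ℓ + 1) - s ℓ log s ℓ`. As `s 0 = 1` and `s k log s k → 0`, the partial sums converge
to `∑ λ ℓ log λ ℓ`; the summands all have the same sign, so this is unconditional summation.
-/

open Real Filter

open Topology

lemma add_mul_binEntropy_div_add (a b : ℝ) :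
    (a + b) * binEntropy (b / (a + b)) = negMulLog a + negMulLog b - negMulLog (a + b) := by
  rcases eq_or_ne (a + b) 0 with hs | hs
  · -- `log` is even, so `negMulLog (-b) = -negMulLog b`.
    rw [eq_neg_of_add_eq_zero_left hs]
    simp [negMulLog]
  have hdiv (c : ℝ) :
      (a + b) * negMulLog (c / (a + b)) = negMulLog c - c / (a + b) * negMulLog (a + b) := by
    have := negMulLog_mul (a + b) (c / (a + b))
    rw [mul_div_cancel₀ _ hs] at this
    linarith
  have hsub : 1 - b / (a + b) = a / (a + b) := by field_simp; ring
  rw [binEntropy_eq_negMulLog_add_negMulLog_one_sub, hsub, mul_add, hdiv, hdiv]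
  field_simp
  ring

lemma neg_binEntropy (p : ℝ) : -binEntropy p = p * log p + (1 - p) * log (1 - p) := by
  simp only [binEntropy, log_inv]
  ring

lemma hasSum_add_sub_of_nonneg {g h : ℕ → ℝ} {G L : ℝ} (hg : HasSum g G)
    (hh : Tendsto h atTop (𝓝 L)) (hf : ∀ n, 0 ≤ g n + (h (n + 1) - h n)) :
    HasSum (fun n => g n + (h (n + 1) - h n)) (G + (L - h 0)) := by
  rw [hasSum_iff_tendsto_nat_of_nonneg hf]
  simp only [Finset.sum_add_distrib, Finset.sum_range_sub]
  exact hg.tendsto_sum_nat.add (hh.sub_const _)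

section tailSum

variable {lam : ℕ → ℝ}

lemma tailSum_zero {a : ℝ} (h : HasSum lam a) : tailSum lam 0 = a := by
  simpa [tailSum] using h.tsum_eq

lemma tailSum_eq_add_tailSum_succ (h : Summable lam) (ℓ : ℕ) :
    tailSum lam ℓ = lam ℓ + tailSum lam (ℓ + 1) := by
  have hℓ : Summable fun n => lam (ℓ + n) := by
    simpa only [add_comm ℓ] using (summable_nat_add_iff ℓ).mpr h
  rw [tailSum, hℓ.tsum_eq_zero_add, tailSum]
  simp only [add_zero, add_assoc, add_comm 1]

lemma tailSum_nonneg (h : ∀ n, 0 ≤ lam n) (ℓ : ℕ) : 0 ≤ tailSum lam ℓ :=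
  tsum_nonneg fun _ => h _

theorem hasSum_tailSum_mul_binEntropy (hnonneg : ∀ n, 0 ≤ lam n) (hsum : HasSum lam 1)
    (hent : Summable fun n => negMulLog (lam n))
    (htail : Tendsto (fun k => negMulLog (tailSum lam k)) atTop (𝓝 0)) :
    HasSum (fun ℓ => tailSum lam ℓ * binEntropy (tailSum lam (ℓ + 1) / tailSum lam ℓ))
      (∑' n, negMulLog (lam n)) := by
  have hrec := tailSum_eq_add_tailSum_succ hsum.summable
  have hs := tailSum_nonneg hnonneg
  have hs₀ := tailSum_zero hsum
  set s := tailSum lam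
  have hsplit (ℓ : ℕ) : s ℓ * binEntropy (s (ℓ + 1) / s ℓ) =
      negMulLog (lam ℓ) + (negMulLog (s (ℓ + 1)) - negMulLog (s ℓ)) := by
    rw [hrec ℓ, add_mul_binEntropy_div_add]
    ring
  have hterm_nonneg (ℓ : ℕ) : 0 ≤ s ℓ * binEntropy (s (ℓ + 1) / s ℓ) := by
    refine mul_nonneg (hs ℓ) (binEntropy_nonneg (div_nonneg (hs _) (hs ℓ)) ?_)
    exact div_le_one_of_le₀ (by linarith [hrec ℓ, hnonneg ℓ]) (hs ℓ)
  have htelescope :=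
    hasSum_add_sub_of_nonneg hent.hasSum htail fun ℓ => hsplit ℓ ▸ hterm_nonneg ℓ
  rw [hs₀, negMulLog_one, sub_zero, add_zero] at htelescope
  exact htelescope.congr_fun hsplit

end tailSum

/-- Telescoping identity: the chain rule for the Shannon entropy of an `ℕ`-valued random
variable written via the sequence of conditional binary choices `x_ℓ = s_{ℓ+1}/s_ℓ`. -/
theorem entropy_chain_rule (lam : ℕ → ℝ) (hpos : ∀ n, 0 < lam n) (hsum : HasSum lam 1)
    (h2 : Summable (fun n : ℕ => lam n * Real.log (lam n)))
    (htail : Tendsto (fun k : ℕ => tailSum lam k * Real.log (tailSum lam k)) atTop (nhds 0)) :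
    ∑' ℓ : ℕ, tailSum lam ℓ *
        ((tailSum lam (ℓ+1) / tailSum lam ℓ) * Real.log (tailSum lam (ℓ+1) / tailSum lam ℓ)
          + (1 - tailSum lam (ℓ+1) / tailSum lam ℓ)
            * Real.log (1 - tailSum lam (ℓ+1) / tailSum lam ℓ))
      = ∑' ℓ : ℕ, lam ℓ * Real.log (lam ℓ) := by
  have hent : Summable fun n => negMulLog (lam n) := by simpa [negMulLog_eq_neg] using h2.neg
  have htail' : Tendsto (fun k => negMulLog (tailSum lam k)) atTop (𝓝 0) := by
    simpa [negMulLog_eq_neg] using htail.neg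
  have hchain := (hasSum_tailSum_mul_binEntropy (fun n => (hpos n).le) hsum hent htail').neg
  simp only [← mul_neg, neg_binEntropy] at hchain
  rw [hchain.tsum_eq, ← tsum_neg]
  simp [negMulLog_eq_neg]
end

section
/- Let ν₀ > 0, ν₁ ≥ 0 and α > 0, and define f_α : (0,1) → ℝ by f_α(x) := (1/(1-x))·((ν₁·x - ν₀)·log x - α·x·log x - α·(1-x)·log(1-x)). Then f_α(x) → +∞ as x → 0⁺ and as x → 1⁻, and f_α attains its minimum over (0,1) precisely at the unique point x₀ ∈ (0,1) satisfying g(x₀) = α, where g(x) := ν₁ - ν₀ + (1-x)·(ν₁·x - ν₀)/(x·log x). -/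
/-!
The derivative of `f_α` factors as `f_α'(x) = log x · (g(x) - α) / (1 - x)²`. The numerator of
`g'(x)` is `ν₁ x (x - 1 - x log x) + ν₀ (log x + 1 - x)`, negative by `log y < y - 1` applied
to `y = x` and `y = 1/x`, so `g` decreases strictly on `(0,1)`, from `+∞` at `0` to `0` at `1`.
It therefore takes the value `α > 0` exactly once, at `x₀`, and since `log x < 0` the function
`f_α` decreases on `(0, x₀]` and increases on `[x₀, 1)`.
-/

open Real Filter

/-- The critical-point function `g` of the entropy-production functional of single-mode
phase-covariant Gaussian semigroups evaluated on thermal states. -/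
noncomputable def gFun (ν₀ ν₁ : ℝ) (x : ℝ) : ℝ :=
  ν₁ - ν₀ + (1 - x) * (ν₁ * x - ν₀) / (x * Real.log x)

/-- The entropy-production functional `f_α` evaluated on thermal states with
geometric parameter `x`. -/
noncomputable def fAlpha (ν₀ ν₁ α : ℝ) (x : ℝ) : ℝ :=
  1 / (1 - x) * ((ν₁ * x - ν₀) * Real.log x - α * x * Real.log x
    - α * (1 - x) * Real.log (1 - x))

open Set Topology

theorem StrictAntiOn.lt_of_strictMonoOn {α β : Type*} [LinearOrder α] [Preorder β] {f : α → β}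
    {a b c x : α} (h₀ : StrictAntiOn f (Ioc a c)) (h₁ : StrictMonoOn f (Ico c b))
    (hx : x ∈ Ioo a b) (hxc : x ≠ c) : f c < f x := by
  rcases hxc.lt_or_gt with hlt | hgt
  · exact h₀ ⟨hx.1, hlt.le⟩ ⟨hx.1.trans hlt, le_rfl⟩ hlt
  · exact h₁ ⟨le_rfl, hgt.trans hx.2⟩ ⟨hgt.le, hx.2⟩ hgt

theorem lt_of_hasDerivAt_of_neg_of_pos {f f' : ℝ → ℝ} {a b c x : ℝ}
    (hf : ∀ y ∈ Ioo a b, HasDerivAt f (f' y) y) (hc : c ∈ Ioo a b)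
    (hneg : ∀ y ∈ Ioo a c, f' y < 0) (hpos : ∀ y ∈ Ioo c b, 0 < f' y)
    (hx : x ∈ Ioo a b) (hxc : x ≠ c) : f c < f x := by
  have hcont : ContinuousOn f (Ioo a b) := fun y hy => (hf y hy).continuousAt.continuousWithinAt
  refine StrictAntiOn.lt_of_strictMonoOn ?_ ?_ hx hxc
  · refine strictAntiOn_of_deriv_neg (convex_Ioc a c)
      (hcont.mono fun y hy => ⟨hy.1, hy.2.trans_lt hc.2⟩) fun y hy => ?_
    rw [interior_Ioc] at hy
    rw [(hf y ⟨hy.1, hy.2.trans hc.2⟩).deriv]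
    exact hneg y hy
  · refine strictMonoOn_of_deriv_pos (convex_Ico c b)
      (hcont.mono fun y hy => ⟨hc.1.trans_le hy.1, hy.2⟩) fun y hy => ?_
    rw [interior_Ico] at hy
    rw [(hf y ⟨hc.1.trans hy.1, hy.2⟩).deriv]
    exact hpos y hy

theorem Real.tendsto_log_div_sub_one_nhdsNE_one :
    Tendsto (fun x : ℝ => log x / (x - 1)) (𝓝[≠] 1) (𝓝 1) := by
  have h := hasDerivAt_iff_tendsto_slope.mp (hasDerivAt_log one_ne_zero)
  rw [inv_one] at h
  refine h.congr fun y => ?_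
  simp [slope_def_field]

theorem Real.sub_one_lt_mul_log {x : ℝ} (h0 : 0 < x) (h1 : x < 1) : x - 1 < x * log x := by
  have h := log_lt_sub_one_of_pos (inv_pos.mpr h0) (by simp [h1.ne])
  rw [log_inv] at h
  have := mul_lt_mul_of_pos_left h h0
  rw [mul_sub, mul_inv_cancel₀ h0.ne'] at this
  linarith

theorem hasDerivAt_gFun (ν₀ ν₁ : ℝ) {x : ℝ} (h0 : 0 < x) (h1 : x < 1) :
    HasDerivAt (gFun ν₀ ν₁)
      ((ν₁ * x * (x - 1 - x * log x) + ν₀ * (log x + 1 - x)) / (x * log x) ^ 2) x := by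
  have hlog : log x ≠ 0 := (log_neg h0 h1).ne
  have hu : HasDerivAt (fun y => (1 - y) * (ν₁ * y - ν₀)) (-1 * (ν₁ * x - ν₀) + (1 - x) * ν₁) x :=
    ((hasDerivAt_id x).const_sub 1).mul (((hasDerivAt_id x).const_mul ν₁).sub_const ν₀)
      |>.congr_deriv (by simp)
  exact ((hu.div (hasDerivAt_mul_log h0.ne') (mul_ne_zero h0.ne' hlog)).const_add (ν₁ - ν₀))
    |>.congr_deriv (by ring)

theorem gFun_strictAntiOn {ν₀ ν₁ : ℝ} (hν₀ : 0 < ν₀) (hν₁ : 0 ≤ ν₁) :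
    StrictAntiOn (gFun ν₀ ν₁) (Ioo 0 1) := by
  refine strictAntiOn_of_deriv_neg (convex_Ioo 0 1)
    (fun x hx => (hasDerivAt_gFun ν₀ ν₁ hx.1 hx.2).continuousAt.continuousWithinAt)
    fun x hx => ?_
  rw [interior_Ioo] at hx
  obtain ⟨h0, h1⟩ := hx
  rw [(hasDerivAt_gFun ν₀ ν₁ h0 h1).deriv]
  have hnum : ν₁ * x * (x - 1 - x * log x) + ν₀ * (log x + 1 - x) < 0 :=
    add_neg_of_nonpos_of_neg
      (mul_nonpos_of_nonneg_of_nonpos (by positivity) (by linarith [sub_one_lt_mul_log h0 h1]))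
      (mul_neg_of_pos_of_neg hν₀ (by linarith [log_lt_sub_one_of_pos h0 h1.ne]))
  exact div_neg_of_neg_of_pos hnum (sq_pos_of_neg (mul_neg_of_pos_of_neg h0 (log_neg h0 h1)))

theorem hasDerivAt_fAlpha (ν₀ ν₁ α : ℝ) {x : ℝ} (h0 : 0 < x) (h1 : x < 1) :
    HasDerivAt (fAlpha ν₀ ν₁ α) (log x * (gFun ν₀ ν₁ x - α) / (1 - x) ^ 2) x := by
  have hx1 : 1 - x ≠ 0 := (sub_pos.2 h1).ne'
  have hlog0 : log x ≠ 0 := (log_neg h0 h1).ne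
  have hid := hasDerivAt_id x
  have hlog := hasDerivAt_log h0.ne'
  have hlog1 := (hasDerivAt_log hx1).comp x (hid.const_sub 1)
  have hN := ((((hid.const_mul ν₁).sub_const ν₀).mul hlog).sub ((hid.const_mul α).mul hlog)).sub
    (((hid.const_sub 1).const_mul α).mul hlog1)
  refine (((hasDerivAt_const x (1 : ℝ)).div (hid.const_sub 1) hx1).mul hN).congr_deriv ?_
  simp only [gFun, id, Function.comp, Pi.mul_apply, Pi.sub_apply, Pi.div_apply]
  field_simp
  ring

theorem fAlpha_tendsto_nhdsGT_zero {ν₀ : ℝ} (ν₁ α : ℝ) (hν₀ : 0 < ν₀) :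
    Tendsto (fAlpha ν₀ ν₁ α) (𝓝[>] 0) atTop := by
  have hlin : Tendsto (fun x => ν₁ * x - ν₀ - α * x) (𝓝[>] 0) (𝓝 (-ν₀)) :=
    ((by fun_prop : Continuous fun x : ℝ => ν₁ * x - ν₀ - α * x).tendsto' 0 _ (by simp))
      |>.mono_left nhdsWithin_le_nhds
  have hent : Tendsto (fun x => α * ((1 - x) * log (1 - x))) (𝓝[>] 0) (𝓝 0) := by
    have : ContinuousAt (fun x => α * ((1 - x) * log (1 - x))) 0 := by fun_prop (disch := norm_num)
    simpa using this.tendsto.mono_left nhdsWithin_le_nhds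
  have hfac : Tendsto (fun x : ℝ => 1 / (1 - x)) (𝓝[>] 0) (𝓝 1) := by
    have : ContinuousAt (fun x : ℝ => 1 / (1 - x)) 0 := by fun_prop (disch := norm_num)
    simpa using this.tendsto.mono_left nhdsWithin_le_nhds
  have := hfac.pos_mul_atTop one_pos
    ((hlin.neg_mul_atBot (neg_neg_of_pos hν₀) tendsto_log_nhdsGT_zero).atTop_add hent.neg)
  refine this.congr fun x => ?_
  simp only [fAlpha]
  ring

theorem fAlpha_tendsto_nhdsLT_one (ν₀ ν₁ : ℝ) {α : ℝ} (hα : 0 < α) :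
    Tendsto (fAlpha ν₀ ν₁ α) (𝓝[<] 1) atTop := by
  have hlin : Tendsto (fun x => ν₀ + (α - ν₁) * x) (𝓝[<] 1) (𝓝 (ν₀ + (α - ν₁) * 1)) :=
    ((by fun_prop : Continuous fun x : ℝ => ν₀ + (α - ν₁) * x).tendsto 1).mono_left
      nhdsWithin_le_nhds
  have hslope := tendsto_log_div_sub_one_nhdsNE_one.mono_left (nhdsLT_le_nhdsNE 1)
  have hone_sub : Tendsto (fun x : ℝ => 1 - x) (𝓝[<] 1) (𝓝[>] 0) := by
    refine tendsto_nhdsWithin_iff.2 ⟨?_, ?_⟩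
    · exact ((continuous_const.sub continuous_id).tendsto' 1 0 (by simp)).mono_left
        nhdsWithin_le_nhds
    · filter_upwards [self_mem_nhdsWithin] with x (hx : x < 1)
      exact sub_pos.2 hx
  have := (hlin.mul hslope).add_atTop
    (Tendsto.neg_mul_atBot (neg_neg_of_pos hα) tendsto_const_nhds
      (tendsto_log_nhdsGT_zero.comp hone_sub))
  refine this.congr' ?_
  filter_upwards [self_mem_nhdsWithin] with x (hx : x < 1)
  have hx1 : 1 - x ≠ 0 := (sub_pos.2 hx).ne'
  have hx1' : x - 1 ≠ 0 := (sub_neg.2 hx).ne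
  simp only [fAlpha, Function.comp]
  field_simp
  ring

theorem gFun_tendsto_nhdsGT_zero {ν₀ : ℝ} (ν₁ : ℝ) (hν₀ : 0 < ν₀) :
    Tendsto (gFun ν₀ ν₁) (𝓝[>] 0) atTop := by
  have hmul_log : Tendsto (fun x => x * log x) (𝓝[>] 0) (𝓝[<] 0) := by
    refine tendsto_nhdsWithin_iff.2 ⟨?_, ?_⟩
    · exact (continuous_mul_log.tendsto' 0 0 (by simp)).mono_left nhdsWithin_le_nhds
    · filter_upwards [Ioo_mem_nhdsGT one_pos] with x hx
      exact mul_neg_of_pos_of_neg hx.1 (log_neg hx.1 hx.2)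
  have hnum : Tendsto (fun x => (1 - x) * (ν₁ * x - ν₀)) (𝓝[>] 0) (𝓝 (-ν₀)) :=
    ((by fun_prop : Continuous fun x : ℝ => (1 - x) * (ν₁ * x - ν₀)).tendsto' 0 _ (by simp))
      |>.mono_left nhdsWithin_le_nhds
  have := hnum.neg_mul_atBot (neg_neg_of_pos hν₀) (tendsto_inv_nhdsLT_zero.comp hmul_log)
  exact tendsto_atTop_add_const_left _ (ν₁ - ν₀) (this.congr fun x => (div_eq_mul_inv _ _).symm)

theorem gFun_tendsto_nhdsLT_one (ν₀ ν₁ : ℝ) : Tendsto (gFun ν₀ ν₁) (𝓝[<] 1) (𝓝 0) := by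
  have hslope : Tendsto (fun x : ℝ => (x - 1) / log x) (𝓝[<] 1) (𝓝 1) := by
    have := (tendsto_log_div_sub_one_nhdsNE_one.inv₀ one_ne_zero).mono_left
      (nhdsLT_le_nhdsNE 1)
    simpa only [inv_div, inv_one] using this
  have hcoef : Tendsto (fun x : ℝ => ν₁ - ν₀ / x) (𝓝[<] 1) (𝓝 (ν₁ - ν₀)) := by
    have : ContinuousAt (fun x : ℝ => ν₁ - ν₀ / x) 1 := by fun_prop (disch := norm_num)
    simpa using this.tendsto.mono_left nhdsWithin_le_nhds
  have := (hcoef.mul hslope).const_sub (ν₁ - ν₀)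
  rw [mul_one, sub_self] at this
  refine this.congr' ?_
  filter_upwards [Ioo_mem_nhdsLT one_pos] with x hx
  have hlog : log x ≠ 0 := (log_neg hx.1 hx.2).ne
  simp only [gFun]
  field_simp [hx.1.ne']
  ring

/-- `f_α → +∞` at both endpoints of `(0,1)`, and `f_α` attains its minimum over `(0,1)`
precisely at the unique point `x₀ ∈ (0,1)` with `g(x₀) = α`. -/
theorem fAlpha_min_at_critical_point (ν₀ ν₁ α : ℝ) (hν₀ : 0 < ν₀) (hν₁ : 0 ≤ ν₁)
    (hα : 0 < α) :
    Tendsto (fAlpha ν₀ ν₁ α) (nhdsWithin 0 (Set.Ioi 0)) atTop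
    ∧ Tendsto (fAlpha ν₀ ν₁ α) (nhdsWithin 1 (Set.Iio 1)) atTop
    ∧ ∃ x₀ : ℝ, x₀ ∈ Set.Ioo (0:ℝ) 1 ∧ gFun ν₀ ν₁ x₀ = α
        ∧ (∀ x ∈ Set.Ioo (0:ℝ) 1, x ≠ x₀ → fAlpha ν₀ ν₁ α x₀ < fAlpha ν₀ ν₁ α x)
        ∧ (∀ x ∈ Set.Ioo (0:ℝ) 1, gFun ν₀ ν₁ x = α → x = x₀) := by
  refine ⟨fAlpha_tendsto_nhdsGT_zero ν₁ α hν₀, fAlpha_tendsto_nhdsLT_one ν₀ ν₁ hα, ?_⟩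
  have hg := gFun_strictAntiOn hν₀ hν₁
  obtain ⟨x₀, hx₀, hgx₀⟩ : α ∈ gFun ν₀ ν₁ '' Ioo 0 1 :=
    isPreconnected_Ioo.intermediate_value_Ioi (le_principal_iff.2 (Ioo_mem_nhdsLT one_pos))
      (le_principal_iff.2 (Ioo_mem_nhdsGT one_pos))
      (fun x hx => (hasDerivAt_gFun ν₀ ν₁ hx.1 hx.2).continuousAt.continuousWithinAt)
      (gFun_tendsto_nhdsLT_one ν₀ ν₁) (gFun_tendsto_nhdsGT_zero ν₁ hν₀) hα
  refine ⟨x₀, hx₀, hgx₀, fun x hx hne => ?_, fun x hx hgx => hg.injOn hx hx₀ (hgx.trans hgx₀.symm)⟩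
  refine lt_of_hasDerivAt_of_neg_of_pos (fun y hy => hasDerivAt_fAlpha ν₀ ν₁ α hy.1 hy.2) hx₀
    (fun y hy => ?_) (fun y hy => ?_) hx hne
  · have hy1 : y < 1 := hy.2.trans hx₀.2
    have : α < gFun ν₀ ν₁ y := hgx₀ ▸ hg ⟨hy.1, hy1⟩ hx₀ hy.2
    exact div_neg_of_neg_of_pos (mul_neg_of_neg_of_pos (log_neg hy.1 hy1) (sub_pos.2 this))
      (pow_pos (sub_pos.2 hy1) 2)
  · have hy0 : 0 < y := hx₀.1.trans hy.1
    have : gFun ν₀ ν₁ y < α := hgx₀ ▸ hg hx₀ ⟨hy0, hy.2⟩ hy.1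
    exact div_pos (mul_pos_of_neg_of_neg (log_neg hy0 hy.2) (sub_neg.2 this))
      (pow_pos (sub_pos.2 hy.2) 2)
end
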